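/- Assume (A1)–(A7). Fix ε > 0 and real numbers c₁ > c₂. If u¹ is a classical solution of the ε-problem with constant c₁ and u² is a classical solution of the ε-problem with constant c₂, then u¹(x) > u²(x) for every x ∈ ℝⁿ. -/

import Mathlib

open Filter MeasureTheory Set Real

noncomputable section

/-- `ℝⁿ` with the Euclidean structure. -/
abbrev Euc (n : ℕ) : Type := EuclideanSpace ℝ (Fin n)

/-- A function on `ℝⁿ` is `ℤⁿ`-periodic. -/
def ZnPeriodic {n : ℕ} (f : Euc n → ℝ) : Prop :=
  ∀ (x : Euc n) (k : Fin n → ℤ), f (x + (show Euc n from WithLp.toLp 2 (fun i => (k i : ℝ)))) = f x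

/-- The Hamiltonian `H(x,p,θ)` is `ℤⁿ`-periodic in `x`. -/
def ZnPeriodicH {n : ℕ} (H : Euc n → Euc n → ℝ → ℝ) : Prop :=
  ∀ (x : Euc n) (k : Fin n → ℤ) (p : Euc n) (θ : ℝ),
    H (x + (show Euc n from WithLp.toLp 2 (fun i => (k i : ℝ)))) p θ = H x p θ

/-- The Laplacian of `u : ℝⁿ → ℝ`, as the trace of the second derivative. -/
def lap {n : ℕ} (u : Euc n → ℝ) (x : Euc n) : ℝ :=
  ∑ i : Fin n, iteratedFDeriv ℝ 2 u x ![EuclideanSpace.single i 1, EuclideanSpace.single i 1]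

/-- A function on `ℝⁿ` is `εℤⁿ`-periodic. -/
def EpsPeriodic {n : ℕ} (ε : ℝ) (f : Euc n → ℝ) : Prop :=
  ∀ (x : Euc n) (k : Fin n → ℤ), f (x + (show Euc n from WithLp.toLp 2 (fun i => ε * (k i : ℝ)))) = f x

/-- `u` is a classical solution of the ε-problem
`H(x/ε, ∇u(x), u(x)) = ε Δu(x) + c`: it is `C²`, `εℤⁿ`-periodic and solves the PDE pointwise. -/
def IsSolEps {n : ℕ} (H : Euc n → Euc n → ℝ → ℝ) (ε c : ℝ) (u : Euc n → ℝ) : Prop :=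
  ContDiff ℝ 2 u ∧ EpsPeriodic ε u ∧
    ∀ x, H (ε⁻¹ • x) (gradient u x) (u x) = ε * lap u x + c

/-- `u` is a classical subsolution of the ε-problem. -/
def IsSubsolEps {n : ℕ} (H : Euc n → Euc n → ℝ → ℝ) (ε c : ℝ) (u : Euc n → ℝ) : Prop :=
  ContDiff ℝ 2 u ∧ EpsPeriodic ε u ∧
    ∀ x, H (ε⁻¹ • x) (gradient u x) (u x) ≤ ε * lap u x + c



/-- 1D second-derivative necessary condition at a global max. -/
lemma aux_second_le_zero {g h : ℝ → ℝ} {c : ℝ}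
    (hg : ∀ t, HasDerivAt g (h t) t) (hh : HasDerivAt h c 0)
    (hmax : ∀ t, g t ≤ g 0) : c ≤ 0 := by
  by_contra hcpos
  push_neg at hcpos
  have hloc : IsLocalMax g 0 := Filter.Eventually.of_forall hmax
  have h0 : h 0 = 0 := hloc.hasDerivAt_eq_zero (hg 0)
  have hslope : Tendsto (slope h 0) (nhdsWithin 0 {(0:ℝ)}ᶜ) (nhds c) :=
    hasDerivAt_iff_tendsto_slope.mp hh
  have hev : ∀ᶠ t in nhdsWithin 0 {(0:ℝ)}ᶜ, 0 < slope h 0 t :=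
    hslope.eventually (eventually_gt_nhds hcpos)
  have hle : nhdsWithin (0:ℝ) (Set.Ioi 0) ≤ nhdsWithin 0 {(0:ℝ)}ᶜ :=
    nhdsWithin_mono 0 (fun t ht => ne_of_gt ht)
  have hev' : ∀ᶠ t in nhdsWithin (0:ℝ) (Set.Ioi 0), 0 < slope h 0 t := hle hev
  obtain ⟨u, hu, hsub⟩ := mem_nhdsGT_iff_exists_Ioc_subset.mp hev'
  have hupos : (0:ℝ) < u := hu
  have hpos : ∀ t ∈ Set.Ioc (0:ℝ) u, 0 < h t := by
    intro t ht
    have h1 := hsub ht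
    have hslope_t : slope h 0 t = h t / t := by
      simp [slope_def_field, h0]
    rw [Set.mem_setOf_eq, hslope_t] at h1
    have htpos : 0 < t := ht.1
    have h2 := mul_pos htpos h1
    have h3 : t * (h t / t) = h t := by field_simp
    rwa [h3] at h2
  have hmono : StrictMonoOn g (Set.Icc 0 u) := by
    apply strictMonoOn_of_deriv_pos (convex_Icc 0 u)
    · exact fun t _ => (hg t).continuousAt.continuousWithinAt
    · intro t ht
      rw [interior_Icc] at ht
      rw [(hg t).deriv]
      exact hpos t ⟨ht.1, le_of_lt ht.2⟩
  have : g 0 < g u := hmono ⟨le_refl 0, le_of_lt hupos⟩ ⟨le_of_lt hupos, le_refl u⟩ hupos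
  exact absurd (hmax u) (not_le.mpr this)

/-- At a global max of a C² function, the second derivative is ≤ 0 in every direction. -/
lemma aux_second_nonpos {E : Type*} [NormedAddCommGroup E] [NormedSpace ℝ E]
    {w : E → ℝ} (hw : ContDiff ℝ 2 w) {x₀ : E}
    (hmax : ∀ x, w x ≤ w x₀) (v : E) :
    iteratedFDeriv ℝ 2 w x₀ ![v, v] ≤ 0 := by
  rw [iteratedFDeriv_two_apply]
  simp only [Matrix.cons_val_zero, Matrix.cons_val_one, Matrix.head_cons]
  have hdw : Differentiable ℝ w := hw.differentiable (by norm_num)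
  have hf' : ContDiff ℝ 1 (fderiv ℝ w) := hw.fderiv_right (by norm_num)
  have hdf' : Differentiable ℝ (fderiv ℝ w) := hf'.differentiable (by norm_num)
  set L : ℝ → E := fun t => x₀ + t • v with hL
  have hLd : ∀ t, HasDerivAt L v t := by
    intro t
    have : HasDerivAt (fun t : ℝ => t • v) ((1:ℝ) • v) t := (hasDerivAt_id t).smul_const v
    exact (by simpa [one_smul] using this : HasDerivAt (fun t : ℝ => t • v) v t).const_add x₀
  have hL0 : L 0 = x₀ := by simp [hL]
  set g : ℝ → ℝ := fun t => w (L t) with hgdef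
  set h : ℝ → ℝ := fun t => fderiv ℝ w (L t) v with hhdef
  have hg : ∀ t, HasDerivAt g (h t) t := by
    intro t
    exact ((hdw (L t)).hasFDerivAt).comp_hasDerivAt t (hLd t)
  have hh : HasDerivAt h (fderiv ℝ (fderiv ℝ w) x₀ v v) 0 := by
    have h1 : HasDerivAt (fun t => fderiv ℝ w (L t)) (fderiv ℝ (fderiv ℝ w) x₀ v) 0 := by
      have hfd : HasFDerivAt (fderiv ℝ w) (fderiv ℝ (fderiv ℝ w) x₀) (L 0) := by
        rw [hL0]; exact (hdf' x₀).hasFDerivAt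
      exact hfd.comp_hasDerivAt 0 (hLd 0)
    have := h1.clm_apply (hasDerivAt_const 0 v)
    simpa [hL0] using this
  have hmax' : ∀ t, g t ≤ g 0 := by
    intro t
    simp only [hgdef, hL0]
    exact hmax (L t)
  exact aux_second_le_zero hg hh hmax'

/-- A continuous εℤⁿ-periodic function attains its global maximum. -/
lemma aux_exists_max {n : ℕ} {ε : ℝ} {f : Euc n → ℝ} (hε : 0 < ε)
    (hf : Continuous f) (hp : ∀ (x : Euc n) (k : Fin n → ℤ),
      f (x + (show Euc n from WithLp.toLp 2 (fun i => ε * (k i : ℝ)))) = f x) :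
    ∃ x₀, ∀ x, f x ≤ f x₀ := by
  set R : ℝ := (n : ℝ) * ε with hR
  have hR0 : 0 ≤ R := mul_nonneg (Nat.cast_nonneg n) hε.le
  have hK : IsCompact (Metric.closedBall (0 : Euc n) R) := isCompact_closedBall _ _
  obtain ⟨x₀, hx₀mem, hx₀⟩ := hK.exists_isMaxOn
    ⟨0, Metric.mem_closedBall_self hR0⟩ hf.continuousOn
  refine ⟨x₀, fun x => ?_⟩
  set k : Fin n → ℤ := fun i => -⌊x i / ε⌋ with hk
  set y : Euc n := x + (show Euc n from WithLp.toLp 2 (fun i => ε * (k i : ℝ))) with hy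
  have hyi : ∀ i, 0 ≤ y i ∧ y i < ε := by
    intro i
    have hyi' : y i = ε * Int.fract (x i / ε) := by
      show x i + ε * ((-⌊x i / ε⌋ : ℤ) : ℝ) = ε * Int.fract (x i / ε)
      rw [Int.fract]
      push_cast
      field_simp
      ring
    constructor
    · rw [hyi']; exact mul_nonneg hε.le (Int.fract_nonneg _)
    · rw [hyi']
      calc ε * Int.fract (x i / ε) < ε * 1 :=
            (mul_lt_mul_iff_right₀ hε).mpr (Int.fract_lt_one _)
        _ = ε := mul_one ε
  have hynorm : ‖y‖ ≤ R := by
    have h1 : ‖y‖ = Real.sqrt (∑ i, ‖y i‖ ^ 2) := EuclideanSpace.norm_eq y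
    have h2 : (∑ i, ‖y i‖ ^ 2) ≤ R ^ 2 := by
      have : ∀ i ∈ Finset.univ, ‖y i‖ ^ 2 ≤ ε ^ 2 := by
        intro i _
        have := hyi i
        rw [Real.norm_eq_abs, abs_of_nonneg this.1]
        nlinarith [this.1, this.2]
      calc (∑ i, ‖y i‖ ^ 2) ≤ ∑ _i : Fin n, ε ^ 2 := Finset.sum_le_sum this
        _ = (n : ℝ) * ε ^ 2 := by simp [mul_comm]
        _ ≤ R ^ 2 := by
            rw [hR]
            rcases Nat.eq_zero_or_pos n with h | h
            · simp [h]
            · have h1n : (1:ℝ) ≤ (n:ℝ) := by exact_mod_cast h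
              nlinarith [sq_nonneg ε]
    rw [h1]
    calc Real.sqrt (∑ i, ‖y i‖ ^ 2) ≤ Real.sqrt (R ^ 2) := Real.sqrt_le_sqrt h2
      _ = R := Real.sqrt_sq hR0
  have hymem : y ∈ Metric.closedBall (0 : Euc n) R := by
    rwa [Metric.mem_closedBall, dist_zero_right]
  calc f x = f y := (hp x k).symm
    _ ≤ f x₀ := hx₀ hymem

/-- Strict ordering of solutions with respect to the constant: if `c₁ > c₂` then any solution
for `c₁` is everywhere strictly larger than any solution for `c₂`. -/
theorem stmt_9 {n : ℕ}
    (H Hθ : Euc n → Euc n → ℝ → ℝ)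
    (hHcont : Continuous fun q : Euc n × Euc n × ℝ => H q.1 q.2.1 q.2.2)
    (hHper : ZnPeriodicH H)
    (hA1 : ∀ (x : Euc n) (θ : ℝ), ConvexOn ℝ Set.univ fun p => H x p θ)
    (hA2 : ∀ (x : Euc n) (θ : ℝ),
      Tendsto (fun p : Euc n => H x p θ / ‖p‖) (comap norm atTop) atTop)
    (hA3deriv : ∀ (x p : Euc n) (θ : ℝ), HasDerivAt (fun t => H x p t) (Hθ x p θ) θ)
    (hA3cont : Continuous fun q : Euc n × Euc n × ℝ => Hθ q.1 q.2.1 q.2.2)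
    (hA3 : ∀ (x p : Euc n) (θ : ℝ), 0 ≤ Hθ x p θ)
    (hA4 : ContDiff ℝ 1 fun q : Euc n × Euc n × ℝ => H q.1 q.2.1 q.2.2)
    (ρstar : ℝ) (hρstar : 0 < ρstar)
    (hA5 : ∀ (x p : Euc n) (θ : ℝ), Hθ x p θ ≤ ρstar)
    (m Λ₀ M₀ : ℝ) (hm : 1 < m) (hΛ₀ : Λ₀ ∈ Set.Ioc (0:ℝ) 1) (hM₀ : 1 ≤ M₀)
    (hA6 : ∀ (x p : Euc n), Λ₀ * ‖p‖ ^ m - M₀ ≤ H x p 0)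
    (hA7 : ∀ ℓ > (0:ℝ), ∃ Λℓ > (0:ℝ), ∃ Mℓ > (0:ℝ), ∀ (x y p : Euc n) (θ : ℝ), |θ| ≤ ℓ →
      |H x p θ - H y p θ| ≤ (Λℓ * ‖p‖ ^ m + Mℓ) * ‖x - y‖)
    (ε c₁ c₂ : ℝ) (hε : 0 < ε) (hc : c₂ < c₁) (u₁ u₂ : Euc n → ℝ)
    (hu₁ : IsSolEps H ε c₁ u₁) (hu₂ : IsSolEps H ε c₂ u₂) :
    ∀ x : Euc n, u₂ x < u₁ x := by
  obtain ⟨hC₁, hper₁, heq₁⟩ := hu₁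
  obtain ⟨hC₂, hper₂, heq₂⟩ := hu₂
  have hd₁ : Differentiable ℝ u₁ := hC₁.differentiable (by norm_num)
  have hd₂ : Differentiable ℝ u₂ := hC₂.differentiable (by norm_num)
  set w : Euc n → ℝ := fun x => u₂ x - u₁ x with hw
  have hwC : ContDiff ℝ 2 w := hC₂.sub hC₁
  have hwper : ∀ (x : Euc n) (k : Fin n → ℤ),
      w (x + (show Euc n from WithLp.toLp 2 (fun i => ε * (k i : ℝ)))) = w x := by
    intro x k
    simp only [hw]
    rw [hper₂ x k, hper₁ x k]
  obtain ⟨x₀, hx₀⟩ := aux_exists_max hε hwC.continuous hwper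
  have hloc : IsLocalMax w x₀ := Filter.Eventually.of_forall hx₀
  have hfw : fderiv ℝ w x₀ = 0 := hloc.fderiv_eq_zero
  have hfeq : fderiv ℝ u₂ x₀ = fderiv ℝ u₁ x₀ := by
    have h1 : fderiv ℝ w x₀ = fderiv ℝ u₂ x₀ - fderiv ℝ u₁ x₀ := fderiv_sub (hd₂ x₀) (hd₁ x₀)
    rw [hfw] at h1
    exact sub_eq_zero.mp h1.symm
  have hgrad : gradient u₂ x₀ = gradient u₁ x₀ := by
    unfold gradient
    rw [hfeq]
  have hadd : ∀ v : Fin 2 → Euc n, iteratedFDeriv ℝ 2 u₂ x₀ v =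
      iteratedFDeriv ℝ 2 w x₀ v + iteratedFDeriv ℝ 2 u₁ x₀ v := by
    intro v
    have h2 : iteratedFDeriv ℝ 2 (fun x => w x + u₁ x) x₀ =
        iteratedFDeriv ℝ 2 w x₀ + iteratedFDeriv ℝ 2 u₁ x₀ :=
      iteratedFDeriv_add_apply' hwC.contDiffAt hC₁.contDiffAt
    have h3 : u₂ = fun x => w x + u₁ x := by
      funext x; simp [hw]
    rw [h3, h2]
    rfl
  have hlapw : lap w x₀ ≤ 0 := by
    unfold lap
    apply Finset.sum_nonpos
    intro i _
    exact aux_second_nonpos hwC hx₀ _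
  have hlapsum : lap u₂ x₀ = lap w x₀ + lap u₁ x₀ := by
    unfold lap
    rw [← Finset.sum_add_distrib]
    exact Finset.sum_congr rfl fun i _ => hadd _
  have hlap : lap u₂ x₀ ≤ lap u₁ x₀ := by linarith
  have hmono : ∀ (z p : Euc n), Monotone fun θ => H z p θ := fun z p =>
    monotone_of_deriv_nonneg (fun θ => (hA3deriv z p θ).differentiableAt)
      (fun θ => by rw [(hA3deriv z p θ).deriv]; exact hA3 z p θ)
  have hkey : u₂ x₀ < u₁ x₀ := by
    by_contra hle
    push_neg at hle
    have h1 := heq₁ x₀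
    have h2 := heq₂ x₀
    rw [hgrad] at h2
    have hm := hmono (ε⁻¹ • x₀) (gradient u₁ x₀) hle
    have hε' : ε * lap u₂ x₀ ≤ ε * lap u₁ x₀ := mul_le_mul_of_nonneg_left hlap hε.le
    simp only at hm
    linarith
  intro x
  have hx := hx₀ x
  simp only [hw] at hx
  linarith
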